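/- Let K be a field, L the free Lie algebra over K on generators ξ₁,…,ξ_n, and let A, B be a partition of {1,…,n} with B nonempty. Let 𝔰 be the Lie ideal of L generated by the generators ξ_j with j ∈ B. Then every bracket [ξ_i,ξ_j] with i ∈ A and j ∈ B lies in 𝔰, every bracket [ξ_i,ξ_j] with both i, j ∈ B lies in the derived ideal [𝔰,𝔰], and the images of the brackets [ξ_i,ξ_j] with i ∈ A, j ∈ B in the abelianization 𝔰/[𝔰,𝔰] are linearly independent over K. -/

import Mathlib

open LieSubmodule

section

variable (K : Type*) [CommRing K] (L : Type*) [LieRing L] [LieAlgebra K L]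

/-- The derived ideal `[I, I]` of a Lie ideal `I`, viewed as a Lie submodule (for the
ambient `L`-action) of `I`. -/
def derivedLieSubmodule (I : LieIdeal K L) : LieSubmodule K L I :=
  lieSpan K L {z : I | ∃ x y : I, (z : L) = ⁅(x : L), (y : L)⁆}

/-- The abelianization `I/[I,I]` of a Lie ideal `I`. -/
abbrev LieIdealAb (I : LieIdeal K L) : Type _ := I ⧸ derivedLieSubmodule K L I

end

/-- The Lie ideal `𝔰` of the free Lie algebra on `Fin n` generated by the generators `ξ_j`
with `j ∈ B`. -/
noncomputable abbrev genIdealOn (K : Type*) [CommRing K] (n : ℕ) (B : Set (Fin n)) :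
    LieIdeal K (FreeLieAlgebra K (Fin n)) :=
  lieSpan K (FreeLieAlgebra K (Fin n)) (FreeLieAlgebra.of K '' B)

/-!
Fix `a ∈ A` and `b ∈ B`. In the two-dimensional non-abelian Lie algebra `K ⋊ Der(K)`, send `ξ_a`
to the identity derivation, `ξ_b` to `1 ∈ K` and every other generator to `0`. As `a ∉ B`, the
ideal `𝔰` is mapped into the abelian ideal `K`, so the map kills `[𝔰, 𝔰]`, and its `K`-component
is a functional on `𝔰/[𝔰,𝔰]` sending `[ξ_i, ξ_j]` (`i ∈ A`, `j ∈ B`) to `1` if `(i, j) = (a, b)`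
and to `0` otherwise. These functionals are dual to the brackets, hence the brackets are
linearly independent.
-/

open LieAlgebra LieAlgebra.SemiDirectSum

section AbelianQuotient

variable {R L M : Type*} [CommRing R] [LieRing L] [LieAlgebra R L] [LieRing M] [LieAlgebra R M]
  {I : LieIdeal R L} {J : LieIdeal R M} [IsLieAbelian J]

lemma derivedLieSubmodule_le_comap_ker (f : L →ₗ⁅R⁆ M) (hIJ : I ≤ J.comap f) :
    derivedLieSubmodule R L I ≤ LieSubmodule.comap (LieSubmodule.incl I) f.ker := by
  rw [derivedLieSubmodule, lieSpan_le]
  rintro z ⟨x, y, hz⟩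
  have hxy : ⁅(⟨f x, hIJ x.2⟩ : J), (⟨f y, hIJ y.2⟩ : J)⁆ = 0 := trivial_lie_zero _ _ _ _
  simpa [hz, LieHom.mem_ker] using congrArg Subtype.val hxy

noncomputable def LieIdealAb.lift (f : L →ₗ⁅R⁆ M) (hIJ : I ≤ J.comap f) :
    LieIdealAb R L I →ₗ[R] M :=
  (derivedLieSubmodule R L I).toSubmodule.liftQ (f.comp I.incl).toLinearMap fun _ hx =>
    derivedLieSubmodule_le_comap_ker f hIJ hx

@[simp] lemma LieIdealAb.lift_mk (f : L →ₗ⁅R⁆ M) (hIJ : I ≤ J.comap f) (x : I) :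
    LieIdealAb.lift f hIJ (LieSubmodule.Quotient.mk x) = f x :=
  rfl

end AbelianQuotient

instance LieAlgebra.SemiDirectSum.isLieAbelian_ker_projr {R K L : Type*} [CommRing R]
    [LieRing K] [LieAlgebra R K] [LieRing L] [LieAlgebra R L] [IsLieAbelian K]
    (ψ : L →ₗ⁅R⁆ LieDerivation R K K) : IsLieAbelian (projr ψ).ker := by
  refine ⟨fun ⟨x, hx⟩ ⟨y, hy⟩ => ?_⟩
  rw [LieHom.mem_ker, projr_mk] at hx hy
  ext
  · simp [hx, hy, trivial_lie_zero]
  · simp [hx, hy]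

def LieDerivation.ofIsLieAbelian {R L : Type*} [CommRing R] [LieRing L] [LieAlgebra R L]
    [IsLieAbelian L] (f : L →ₗ[R] L) : LieDerivation R L L where
  __ := f
  leibniz' a b := by simp [trivial_lie_zero]

@[simp] lemma LieDerivation.ofIsLieAbelian_apply {R L : Type*} [CommRing R] [LieRing L]
    [LieAlgebra R L] [IsLieAbelian L] (f : L →ₗ[R] L) (x : L) :
    LieDerivation.ofIsLieAbelian f x = f x :=
  rfl

section FreeLieAlgebra

attribute [local instance] LieRing.ofAssociativeRing

variable (K : Type*) [CommRing K] {X : Type*} [DecidableEq X]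

instance : IsLieAbelian K := isMulCommutative_iff_isLieAbelian.mp inferInstance

noncomputable def pairHom (a b : X) :
    FreeLieAlgebra K X →ₗ⁅K⁆ K ⋊⁅LieHom.id⁆ LieDerivation K K K :=
  FreeLieAlgebra.lift K fun i =>
    ⟨if i = b then 1 else 0, if i = a then LieDerivation.ofIsLieAbelian LinearMap.id else 0⟩

lemma pairHom_of (a b i : X) :
    pairHom K a b (FreeLieAlgebra.of K i) =
      ⟨if i = b then 1 else 0, if i = a then LieDerivation.ofIsLieAbelian LinearMap.id else 0⟩ :=
  FreeLieAlgebra.lift_of_apply _ i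

lemma lieSpan_le_comap_ker_projr_pairHom {a : X} {B : Set X} (ha : a ∉ B) (b : X) :
    lieSpan K (FreeLieAlgebra K X) (FreeLieAlgebra.of K '' B) ≤
      (projr LieHom.id).ker.comap (pairHom K a b) := by
  rw [lieSpan_le]
  rintro _ ⟨j, hj, rfl⟩
  simp [LieHom.mem_ker, pairHom_of, ne_of_mem_of_not_mem hj ha]

lemma pairHom_lie_of_left (a b i j : X) :
    (pairHom K a b ⁅FreeLieAlgebra.of K i, FreeLieAlgebra.of K j⁆).left =
      (if i = a ∧ j = b then 1 else 0) - (if j = a ∧ i = b then 1 else 0) := by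
  simp only [LieHom.map_lie, pairHom_of, lie_eq_mk, trivial_lie_zero, zero_add, LieHom.id_apply]
  split_ifs <;> simp_all

theorem linearIndependent_mk_lie_of {A B : Set X} (hAB : Disjoint A B) :
    LinearIndependent K (fun p : A × B =>
      LieSubmodule.Quotient.mk
        (N := derivedLieSubmodule K _ (lieSpan K (FreeLieAlgebra K X) (FreeLieAlgebra.of K '' B)))
        ⁅FreeLieAlgebra.of K (p.1 : X),
          (⟨FreeLieAlgebra.of K (p.2 : X), subset_lieSpan (Set.mem_image_of_mem _ p.2.2)⟩ :
            lieSpan K (FreeLieAlgebra K X) (FreeLieAlgebra.of K '' B))⁆) := by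
  let f (p : A × B) := projl LieHom.id ∘ₗ LieIdealAb.lift (pairHom K (p.1 : X) p.2)
    (lieSpan_le_comap_ker_projr_pairHom K (hAB.notMem_of_mem_left p.1.2) p.2)
  refine LinearIndependent.of_comp (LinearMap.pi f) ?_
  convert Pi.linearIndependent_single_one (A × B) K using 1
  · funext p q
    simp only [f, Function.comp_apply, LinearMap.pi_apply, LinearMap.comp_apply,
      LieIdealAb.lift_mk, LieSubmodule.coe_bracket, projl_mk, pairHom_lie_of_left]
    have hne : (p.2 : X) ≠ q.1 := (hAB.ne_of_mem q.1.2 p.2.2).symm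
    simp [hne, Pi.single_apply, Prod.ext_iff, Subtype.ext_iff, eq_comm]
  · -- `Pi.module` and `Pi.Function.module` agree definitionally
    rfl

end FreeLieAlgebra

theorem brackets_in_ideal_linearly_independent_general (K : Type*) [Field K] (n : ℕ)
    (A B : Set (Fin n)) (hdisj : Disjoint A B) :
    (∀ i ∈ A, ∀ j ∈ B,
      ⁅FreeLieAlgebra.of K i, FreeLieAlgebra.of K j⁆ ∈ genIdealOn K n B) ∧
    (∀ i ∈ B, ∀ j ∈ B,
      ⁅FreeLieAlgebra.of K i, FreeLieAlgebra.of K j⁆ ∈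
        (⁅genIdealOn K n B, genIdealOn K n B⁆ : LieIdeal K (FreeLieAlgebra K (Fin n)))) ∧
    LinearIndependent K (fun p : ↥A × ↥B =>
      LieSubmodule.Quotient.mk
        (N := derivedLieSubmodule K (FreeLieAlgebra K (Fin n)) (genIdealOn K n B))
        ⁅FreeLieAlgebra.of K (p.1 : Fin n),
          (⟨FreeLieAlgebra.of K (p.2 : Fin n),
            subset_lieSpan (Set.mem_image_of_mem _ p.2.2)⟩ : genIdealOn K n B)⁆) := by
  have hgen {j} (hj : j ∈ B) : FreeLieAlgebra.of K j ∈ genIdealOn K n B :=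
    subset_lieSpan (Set.mem_image_of_mem _ hj)
  exact ⟨fun _ _ _ hj => (genIdealOn K n B).lie_mem (hgen hj),
    fun i hi j hj => lie_mem_lie (hgen hi) (hgen hj),
    linearIndependent_mk_lie_of K hdisj⟩

/-- Let `K` be a field, `L` the free Lie algebra over `K` on `ξ₁,…,ξ_n`, `A, B` a partition
of `{1,…,n}` with `B` nonempty, and `𝔰` the Lie ideal generated by the `ξ_j`, `j ∈ B`.
Then every `[ξ_i, ξ_j]` with `i ∈ A`, `j ∈ B` lies in `𝔰`; every `[ξ_i, ξ_j]` with
`i, j ∈ B` lies in the derived ideal `[𝔰, 𝔰]`; and the images of the `[ξ_i, ξ_j]` with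
`i ∈ A`, `j ∈ B` in the abelianization `𝔰/[𝔰,𝔰]` are linearly independent over `K`. -/
theorem brackets_in_ideal_linearly_independent (K : Type*) [Field K] (n : ℕ)
    (A B : Set (Fin n)) (hunion : A ∪ B = Set.univ) (hdisj : Disjoint A B)
    (hB : B.Nonempty) :
    (∀ i ∈ A, ∀ j ∈ B,
      ⁅FreeLieAlgebra.of K i, FreeLieAlgebra.of K j⁆ ∈ genIdealOn K n B) ∧
    (∀ i ∈ B, ∀ j ∈ B,
      ⁅FreeLieAlgebra.of K i, FreeLieAlgebra.of K j⁆ ∈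
        (⁅genIdealOn K n B, genIdealOn K n B⁆ : LieIdeal K (FreeLieAlgebra K (Fin n)))) ∧
    LinearIndependent K (fun p : ↥A × ↥B =>
      LieSubmodule.Quotient.mk
        (N := derivedLieSubmodule K (FreeLieAlgebra K (Fin n)) (genIdealOn K n B))
        ⁅FreeLieAlgebra.of K (p.1 : Fin n),
          (⟨FreeLieAlgebra.of K (p.2 : Fin n),
            subset_lieSpan (Set.mem_image_of_mem _ p.2.2)⟩ : genIdealOn K n B)⁆) :=
  brackets_in_ideal_linearly_independent_general K n A B hdisj
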